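/- Let T_ρ(x)=x+ρ mod 1 be the rotation of the circle with ρ irrational of bounded type, and choose z̃₀∈S¹ such that the orbits O_{T_ρ}(x̃₀) and O_{T_ρ}(z̃₀) are disjoint. Then there exists a subsequence (n_m) of the integers and constants 0<c<C<1 such that for every m and every 0≤k<q_{n_m+1}, the barycentric coefficient of z̃_k=T_ρ^k(z̃₀) in the interval Ĩ^{(n_m)}(z̃_k) of the dynamical partition P_{n_m}(T_ρ,x̃₀) containing it lies in [c,C]; equivalently, both connected components of Ĩ^{(n_m)}(z̃_k)∖{z̃_k} have length at least a universal positive fraction of |Ĩ^{(n_m)}(z̃_k)|. -/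

import Mathlib

/-! With `α = z̃₀ - x̃₀`, both endpoints of the interval of `P_n(T_ρ, x̃₀)` containing `z̃_k` are
points `x̃_t` with `|k - t| ≤ 2 q_{n+1}`, and the interval has length at most `‖qₙ ρ‖`. So it is
enough to find infinitely many `n` with `‖α + t ρ‖ ≥ c ‖qₙ ρ‖` for all `|t| ≤ 2 q_{n+1}`. If this
failed from some `n` on, the offending times at two consecutive scales would differ by less than
`q_{n+8}`; by the best approximation property and bounded type
(`‖qₙ ρ‖ ≤ (M + 1)⁷ ‖q_{n+7} ρ‖`) they coincide. A single `t` would then have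
`‖α + t ρ‖ < c ‖qₙ ρ‖ → 0`, contradicting the disjointness of the orbits. -/

open MeasureTheory Filter Set

noncomputable section

/-- Iterates of the Gauss map, starting from `ρ`. -/
def gaussIter (ρ : ℝ) : ℕ → ℝ := fun n => (fun x : ℝ => Int.fract x⁻¹)^[n] ρ

/-- Partial quotients of the continued fraction of `ρ ∈ (0,1)`: `cfK ρ n = k_{n+1}`. -/
def cfK (ρ : ℝ) (n : ℕ) : ℕ := ⌊(gaussIter ρ n)⁻¹⌋₊

/-- Denominators of the convergents of `ρ` (the first return times `q_n`). -/
def cfDen (ρ : ℝ) : ℕ → ℕ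
  | 0 => 1
  | 1 => cfK ρ 0
  | (n+2) => cfK ρ (n+1) * cfDen ρ (n+1) + cfDen ρ n

/-- `ρ` has continued fraction expansion `[k₁,…,k_m,1,1,…]`. -/
def EventuallyGolden (ρ : ℝ) (m : ℕ) : Prop := 1 ≤ m ∧ ∀ i, m ≤ i → cfK ρ i = 1

/-- `ρ` is of bounded type (bounded partial quotients). -/
def BoundedType (ρ : ℝ) : Prop := ∃ M : ℕ, ∀ i, cfK ρ i ≤ M

/-- `a` and `b` represent the same point of the circle `ℝ/ℤ`. -/
def ceq (a b : ℝ) : Prop := ∃ j : ℤ, a - b = (j : ℝ)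

/-- The point of the circle represented by `z` has a representative in `J`. -/
def memC (z : ℝ) (J : Set ℝ) : Prop := ∃ j : ℤ, z + (j : ℝ) ∈ J

/-- Inclusion of subsets of the circle (via representatives). -/
def subC (A B : Set ℝ) : Prop := ∀ z ∈ A, ∃ j : ℤ, z + (j : ℝ) ∈ B

/-- `T` is (a lift of) an orientation preserving circle homeomorphism. -/
def IsCircleHomeo (T : ℝ → ℝ) : Prop :=
  StrictMono T ∧ Continuous T ∧ ∀ x, T (x + 1) = T x + 1

/-- `T` has rotation number `ρ`. -/
def HasRotNum (T : ℝ → ℝ) (ρ : ℝ) : Prop :=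
  ∀ x : ℝ, Tendsto (fun n : ℕ => (T^[n] x - x) / (n : ℝ)) atTop (nhds ρ)

/-- Length (Lebesgue measure) of a set of reals. -/
def len (J : Set ℝ) : ℝ := (volume J).toReal

/-- The generator `I_0^{(n)}(z)`: the arc between `z` and `T^{q_n}(z)`,
written in the lift as the interval between `z` and the representative of
`T^{q_n}(z)` nearest to `z`. -/
def fundI (T : ℝ → ℝ) (qn : ℕ) (z : ℝ) : Set ℝ :=
  Set.uIcc z (T^[qn] z - (round (T^[qn] z - z) : ℝ))

/-- `J` is an element of the `n`-th dynamical partition `P_n(T,z)`. -/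
def IsPartElem (T : ℝ → ℝ) (q : ℕ → ℕ) (n : ℕ) (z : ℝ) (J : Set ℝ) : Prop :=
  (∃ i < q (n+1), J = T^[i] '' fundI T (q n) z) ∨
  (∃ j < q n, J = T^[j] '' fundI T (q (n+1)) z)

/-- The Lyapunov function `Λ_s(z,n)`. -/
def Lam (T : ℝ → ℝ) (s : ℝ) (z : ℝ) (n : ℕ) : ℝ :=
  1 + ∑ k ∈ Finset.Ico 1 n, ∏ j ∈ Finset.Ico k n, |deriv T (T^[j] z)| ^ s

/-- The Lyapunov function `Λ̂(z,n)`. -/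
def Lhat (T : ℝ → ℝ) (z : ℝ) (n : ℕ) : ℝ :=
  sSup ((fun i => ∑ k ∈ Finset.Icc 1 i, ∏ j ∈ Finset.Icc k i, |deriv T (T^[j] z)|) '' Set.Ico 1 n)

/-- `T` is `C^{2+ε}` away from the break point `xb`. -/
def BreakSmooth (T : ℝ → ℝ) (xb : ℝ) : Prop :=
  ∃ ε > (0:ℝ), ∃ H : ℝ, ContDiffOn ℝ 2 T (Set.Ioo xb (xb + 1)) ∧
    ∀ x ∈ Set.Ioo xb (xb + 1), ∀ y ∈ Set.Ioo xb (xb + 1),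
      |deriv (deriv T) x - deriv (deriv T) y| ≤ H * |x - y| ^ ε

/-- `xb` is a break point of `T` with one-sided derivatives `dL` and `dR`. -/
def IsBreakPoint (T : ℝ → ℝ) (xb dL dR : ℝ) : Prop :=
  0 < dL ∧ 0 < dR ∧ dL ≠ dR ∧
    HasDerivWithinAt T dL (Set.Iic xb) xb ∧ HasDerivWithinAt T dR (Set.Ici xb) xb

/-- The Denjoy constant `v = Var(log T') + 2|log c_T(x_b)|`. -/
def vConst (T : ℝ → ℝ) (xb dL dR : ℝ) : ℝ :=
  (eVariationOn (fun y => Real.log (deriv T y)) (Set.Icc xb (xb + 1))).toReal +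
    2 * |Real.log (Real.sqrt (dL / dR))|

/-- θ₊ = (1+e^v)^{-1/2}. -/
def thetaP (v : ℝ) : ℝ := (1 + Real.exp v) ^ (-(1/2 : ℝ))

/-- θ₋ = (1+e^{-v})^{-1/2}. -/
def thetaM (v : ℝ) : ℝ := (1 + Real.exp (-v)) ^ (-(1/2 : ℝ))

/-- The forward orbit of `z` never hits the circle point of `xb`
(equivalently, `z` is not in the backward orbit of `xb`), up to time `N`. -/
def AvoidBreak (T : ℝ → ℝ) (xb z : ℝ) (N : ℕ) : Prop := ∀ i < N, ¬ ceq (T^[i] z) xb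

/-- `z` does not belong to the backward orbit `{T^i(xb) : i = 0,-1,-2,…}`. -/
def OffOrbit (T : ℝ → ℝ) (xb z : ℝ) : Prop := ∀ i : ℕ, ¬ ceq (T^[i] z) xb

/-- The (full) orbits of `z` and `x` under the invertible map `T` are disjoint. -/
def OrbitsDisjoint (T : ℝ → ℝ) (z x : ℝ) : Prop := ∀ i j : ℕ, ¬ ceq (T^[i] z) (T^[j] x)

/-- Hypotheses of Denjoy's inequality: circle homeomorphism with one break point,
`log T'` of bounded variation, jump ratio `≠ 1`, irrational rotation number. -/
def DenjoyHyp (T : ℝ → ℝ) (xb dL dR ρ : ℝ) : Prop :=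
  IsCircleHomeo T ∧ IsBreakPoint T xb dL dR ∧
  ContDiffOn ℝ 1 T (Set.Ioo xb (xb + 1)) ∧
  eVariationOn (fun y => Real.log (deriv T y)) (Set.Icc xb (xb + 1)) ≠ ⊤ ∧
  HasRotNum T ρ ∧ Irrational ρ ∧ ρ ∈ Set.Ioo (0:ℝ) 1

/-- The standing hypotheses of the main theorem:
`T ∈ C^{2+ε}(S¹∖{x_b})`, one break point, `T' ≥ const > 0`,
rotation number `ρ_T = [k₁,…,k_m,1,1,…]`. -/
def MainHyp (T : ℝ → ℝ) (xb dL dR ρ : ℝ) (m : ℕ) : Prop :=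
  IsCircleHomeo T ∧ BreakSmooth T xb ∧ IsBreakPoint T xb dL dR ∧
  (∃ c > (0:ℝ), ∀ x ∈ Set.Ioo xb (xb + 1), c ≤ deriv T x) ∧
  HasRotNum T ρ ∧ Irrational ρ ∧ ρ ∈ Set.Ioo (0:ℝ) 1 ∧ EventuallyGolden ρ m

/-- The stochastic sequence `z̄_{n+1} = T(z̄_n) + σ ξ_{n+1}`, `z̄₀ = z₀`. -/
def zbar {Ω : Type*} (T : ℝ → ℝ) (ξ : ℕ → Ω → ℝ) (σ z₀ : ℝ) : ℕ → Ω → ℝ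
  | 0 => fun _ => z₀
  | (n+1) => fun ω => T (zbar T ξ σ z₀ n ω) + σ * ξ (n+1) ω

/-- The linearized effective noise `L_n(z₀)`. -/
def Lproc {Ω : Type*} (T : ℝ → ℝ) (ξ : ℕ → Ω → ℝ) (z₀ : ℝ) (n : ℕ) (ω : Ω) : ℝ :=
  ξ n ω + ∑ k ∈ Finset.Ico 1 n, ξ k ω * ∏ j ∈ Finset.Ico k n, deriv T (T^[j] z₀)

/-- The normalized process `ω_n(z₀,σ)`. -/
def omegaProc {Ω : Type*} [MeasurableSpace Ω] (P : Measure Ω) (T : ℝ → ℝ)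
    (ξ : ℕ → Ω → ℝ) (σ z₀ : ℝ) (n : ℕ) (ω : Ω) : ℝ :=
  (zbar T ξ σ z₀ n ω - T^[n] z₀) /
    (σ * Real.sqrt (ProbabilityTheory.variance (Lproc T ξ z₀ n) P))

/-- The distribution function of the standard Gaussian. -/
def stdGaussCdf (z : ℝ) : ℝ := ((ProbabilityTheory.gaussianReal 0 1) (Set.Iic z)).toReal

/-- The noise conditions: independent, mean zero, comparable `p`-th moments. -/
def NoiseHyp {Ω : Type*} [MeasurableSpace Ω] (P : Measure Ω) (ξ : ℕ → Ω → ℝ) (p : ℝ) : Prop :=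
  (∀ n, Measurable (ξ n)) ∧
  ProbabilityTheory.iIndepFun ξ P ∧
  (∀ n, Integrable (ξ n) P) ∧
  (∀ n, Integrable (fun ω => |ξ n ω| ^ p) P) ∧
  (∀ n, ∫ ω, ξ n ω ∂P = 0) ∧
  ∃ c C : ℝ, 0 < c ∧
    (∀ n, c ≤ (∫ ω, |ξ n ω| ^ (2:ℝ) ∂P) ^ ((1:ℝ)/2)) ∧
    (∀ n, (∫ ω, |ξ n ω| ^ (2:ℝ) ∂P) ^ ((1:ℝ)/2) ≤ (∫ ω, |ξ n ω| ^ p ∂P) ^ (1/p)) ∧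
    (∀ n, (∫ ω, |ξ n ω| ^ p ∂P) ^ (1/p) ≤ C)


/-- The closed arc of the circle from `a` to (the representative nearest `a` of) `b`. -/
def cArc (a b : ℝ) : Set ℝ :=
  {z | ∃ j : ℤ, z + (j : ℝ) ∈ Set.uIcc a (b - (round (b - a) : ℝ))}

/-- The half-open arc of the circle from `a` to `b`, containing `a` but not `b`. -/
def cArcHalf (a b : ℝ) : Set ℝ :=
  {z | ∃ j : ℤ, z + (j : ℝ) ∈ Set.uIcc a (b - (round (b - a) : ℝ)) ∧
        z + (j : ℝ) ≠ b - (round (b - a) : ℝ)}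

/-- `Ĩ^{(lvl)}_i(x̃₀) = T_ρ^i` of the closed arc with endpoints `x̃₀` and `x̃_{q_lvl}`. -/
def rotI (ρ x0 : ℝ) (lvl i : ℕ) : Set ℝ :=
  cArc (x0 + (i : ℝ) * ρ) (x0 + (i : ℝ) * ρ + (cfDen ρ lvl : ℝ) * ρ)

/-- `T_ρ^i([x̃₀, x̃_{-q_{n+1}}))`. -/
def rotHalfA (ρ x0 : ℝ) (n i : ℕ) : Set ℝ :=
  cArcHalf (x0 + (i : ℝ) * ρ) (x0 + (i : ℝ) * ρ - (cfDen ρ (n+1) : ℝ) * ρ)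

/-- `T_ρ^i([x̃_{-q_{n+1}}, x̃_{q_n}))`. -/
def rotHalfB (ρ x0 : ℝ) (n i : ℕ) : Set ℝ :=
  cArcHalf (x0 + (i : ℝ) * ρ - (cfDen ρ (n+1) : ℝ) * ρ)
    (x0 + (i : ℝ) * ρ + (cfDen ρ n : ℝ) * ρ)

/-- `Ĩ^{(lvl)}_i(x̃₀)` as an interval in the lift: translate by `i·ρ` of the
interval between `x̃₀` and the representative of `x̃_{q_lvl}` nearest to `x̃₀`. -/
def rotElemR (ρ x0 : ℝ) (lvl i : ℕ) : Set ℝ :=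
  Set.uIcc (x0 + (i : ℝ) * ρ)
    (x0 + (i : ℝ) * ρ + (cfDen ρ lvl : ℝ) * ρ - (round ((cfDen ρ lvl : ℝ) * ρ) : ℝ))

/-- `J` is an element of the dynamical partition `P_n(T_ρ, x̃₀)`. -/
def IsRotPartElem (ρ x0 : ℝ) (n : ℕ) (J : Set ℝ) : Prop :=
  (∃ i < cfDen ρ (n+1), J = rotElemR ρ x0 n i) ∨
  (∃ j < cfDen ρ n, J = rotElemR ρ x0 (n+1) j)

theorem abs_le_abs_add_of_mul_nonneg {R : Type*} [CommRing R] [LinearOrder R]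
    [IsStrictOrderedRing R] {a b : R} (h : 0 ≤ a * b) : |a| ≤ |a + b| :=
  sq_le_sq.mp (by nlinarith [sq_nonneg b, mul_comm a b])

theorem ne_zero_and_mul_nonpos_of_abs_add_lt {A B q₀ q₁ : ℤ} (hq₀ : 0 < q₀) (hq₁ : 0 < q₁)
    (h₀ : A * q₀ + B * q₁ ≠ 0) (hlt : |A * q₀ + B * q₁| < q₁) : A ≠ 0 ∧ A * B ≤ 0 := by
  have hB : B ≠ 0 → q₁ ≤ |B * q₁| := fun hB => by
    rw [abs_mul, abs_of_pos hq₁]; nlinarith [Int.one_le_abs hB]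
  constructor
  · rintro rfl
    rw [zero_mul, zero_add] at h₀ hlt
    linarith [hB (left_ne_zero_of_mul h₀)]
  · by_contra! hAB
    have := abs_le_abs_add_of_mul_nonneg
      (show 0 ≤ B * q₁ * (A * q₀) by nlinarith [mul_pos hq₀ hq₁])
    rw [add_comm] at this
    linarith [hB (right_ne_zero_of_mul hAB.ne')]

theorem UnitAddCircle.norm_coe_le_abs_add_intCast (x : ℝ) (m : ℤ) :
    ‖(x : UnitAddCircle)‖ ≤ |x + m| := by
  rw [UnitAddCircle.norm_eq, ← sub_neg_eq_add, ← Int.cast_neg]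
  exact round_le x (-m)

theorem le_barycentric_le_of_le_abs_sub {a b x c : ℝ} (hab : a ≠ b) (hx : x ∈ uIcc a b)
    (ha : c * |b - a| ≤ |x - a|) (hb : c * |b - a| ≤ |x - b|) :
    c ≤ (x - sInf (uIcc a b)) / (sSup (uIcc a b) - sInf (uIcc a b)) ∧
      (x - sInf (uIcc a b)) / (sSup (uIcc a b) - sInf (uIcc a b)) ≤ 1 - c := by
  have key : ∀ {l r : ℝ}, l < r → c * (r - l) ≤ x - l → c * (r - l) ≤ r - x →
      c ≤ (x - l) / (r - l) ∧ (x - l) / (r - l) ≤ 1 - c := fun hlr hl hr =>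
    ⟨(le_div_iff₀ (sub_pos.2 hlr)).2 hl, (div_le_iff₀ (sub_pos.2 hlr)).2 (by linarith)⟩
  rcases hab.lt_or_gt with h | h
  · rw [uIcc_of_le h.le] at hx ⊢
    rw [csInf_Icc h.le, csSup_Icc h.le]
    rw [abs_of_pos (sub_pos.2 h), abs_of_nonneg (sub_nonneg.2 hx.1)] at ha
    rw [abs_of_pos (sub_pos.2 h), abs_of_nonpos (sub_nonpos.2 hx.2)] at hb
    exact key h ha (by linarith)
  · rw [uIcc_of_ge h.le] at hx ⊢
    rw [csInf_Icc h.le, csSup_Icc h.le]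
    rw [abs_of_neg (sub_neg.2 h), abs_of_nonpos (sub_nonpos.2 hx.2)] at ha
    rw [abs_of_neg (sub_neg.2 h), abs_of_nonneg (sub_nonneg.2 hx.1)] at hb
    exact key h (by linarith) (by linarith)

def cfNum (ρ : ℝ) : ℕ → ℤ
  | 0 => 0
  | 1 => 1
  | (n+2) => cfK ρ (n+1) * cfNum ρ (n+1) + cfNum ρ n

-- equals `|qₙ ρ - pₙ|`, see `cfDen_mul_sub_cfNum`
def cfErr (ρ : ℝ) (n : ℕ) : ℝ := ∏ i ∈ Finset.range (n + 1), gaussIter ρ i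

theorem gaussIter_succ (ρ : ℝ) (n : ℕ) :
    gaussIter ρ (n + 1) = Int.fract (gaussIter ρ n)⁻¹ := by
  simp [gaussIter, Function.iterate_succ_apply']

theorem cfErr_succ (ρ : ℝ) (n : ℕ) : cfErr ρ (n + 1) = cfErr ρ n * gaussIter ρ (n + 1) :=
  Finset.prod_range_succ _ _

theorem cfNum_succ_mul_cfDen_sub (ρ : ℝ) (n : ℕ) :
    cfNum ρ (n + 1) * cfDen ρ n - cfNum ρ n * cfDen ρ (n + 1) = (-1) ^ n := by
  induction n with
  | zero => simp [cfNum, cfDen]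
  | succ n ih =>
    simp only [cfNum, cfDen, pow_succ, ← ih]
    push_cast
    ring

theorem exists_eq_cfDen_cfNum_combination (ρ : ℝ) (n : ℕ) (t u : ℤ) :
    ∃ A B : ℤ, t = A * cfDen ρ n + B * cfDen ρ (n + 1) ∧
      u = A * cfNum ρ n + B * cfNum ρ (n + 1) := by
  have hdet := cfNum_succ_mul_cfDen_sub ρ n
  have hsq : ((-1 : ℤ) ^ n) ^ 2 = 1 := by rw [← pow_mul, mul_comm, pow_mul]; norm_num
  refine ⟨(-1) ^ n * (cfNum ρ (n + 1) * t - cfDen ρ (n + 1) * u),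
    (-1) ^ n * (cfDen ρ n * u - cfNum ρ n * t), ?_, ?_⟩
  · linear_combination (-(-1 : ℤ) ^ n * t) * hdet - t * hsq
  · linear_combination (-(-1 : ℤ) ^ n * u) * hdet - u * hsq

section IrrationalRotation

variable {ρ : ℝ} (hirr : Irrational ρ) (hρ : ρ ∈ Ioo (0 : ℝ) 1)
include hirr hρ

theorem irrational_gaussIter_and_mem_Ioo (n : ℕ) :
    Irrational (gaussIter ρ n) ∧ gaussIter ρ n ∈ Ioo (0 : ℝ) 1 := by
  induction n with
  | zero => exact ⟨hirr, hρ⟩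
  | succ n ih =>
    have hfract : Irrational (Int.fract (gaussIter ρ n)⁻¹) := ih.1.inv.sub_intCast _
    rw [gaussIter_succ]
    refine ⟨hfract, (Int.fract_nonneg _).lt_of_ne ?_, Int.fract_lt_one _⟩
    exact fun h => hfract.ne_int 0 (by simpa using h.symm)

theorem gaussIter_pos (n : ℕ) : 0 < gaussIter ρ n :=
  (irrational_gaussIter_and_mem_Ioo hirr hρ n).2.1

theorem gaussIter_lt_one (n : ℕ) : gaussIter ρ n < 1 :=
  (irrational_gaussIter_and_mem_Ioo hirr hρ n).2.2

theorem one_le_cfK (n : ℕ) : 1 ≤ cfK ρ n :=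
  Nat.le_floor (by
    rw [Nat.cast_one]
    exact (one_lt_inv₀ (gaussIter_pos hirr hρ n)).2 (gaussIter_lt_one hirr hρ n) |>.le)

theorem gaussIter_mul_gaussIter_succ (n : ℕ) :
    gaussIter ρ n * gaussIter ρ (n + 1) = 1 - cfK ρ n * gaussIter ρ n := by
  have hne := (gaussIter_pos hirr hρ n).ne'
  have hfloor : (cfK ρ n : ℝ) = ⌊(gaussIter ρ n)⁻¹⌋ := by
    rw [cfK, ← Int.natCast_floor_eq_floor (inv_pos.2 (gaussIter_pos hirr hρ n)).le]; rfl
  rw [gaussIter_succ, Int.fract, ← hfloor]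
  field_simp

theorem gaussIter_mul_gaussIter_succ_le_half (n : ℕ) :
    gaussIter ρ n * gaussIter ρ (n + 1) ≤ 1 / 2 := by
  have hx := gaussIter_pos hirr hρ n
  have hk : (1 : ℝ) ≤ cfK ρ n := by exact_mod_cast one_le_cfK hirr hρ n
  have hmul := gaussIter_mul_gaussIter_succ hirr hρ n
  rcases le_or_gt (gaussIter ρ n) (1 / 2) with h | h
  · nlinarith [gaussIter_lt_one hirr hρ (n + 1)]
  · nlinarith

theorem cfErr_pos (n : ℕ) : 0 < cfErr ρ n :=
  Finset.prod_pos fun i _ => gaussIter_pos hirr hρ i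

theorem cfErr_antitone : Antitone (cfErr ρ) :=
  antitone_nat_of_succ_le fun n => by
    rw [cfErr_succ]
    exact mul_le_of_le_one_right (cfErr_pos hirr hρ n).le (gaussIter_lt_one hirr hρ _).le

theorem cfErr_two_mul_add_one_le (k : ℕ) : cfErr ρ (2 * k + 1) ≤ (1 / 2) ^ (k + 1) := by
  induction k with
  | zero =>
    simpa [cfErr, Finset.prod_range_succ] using gaussIter_mul_gaussIter_succ_le_half hirr hρ 0
  | succ k ih =>
    rw [show 2 * (k + 1) + 1 = 2 * k + 1 + 1 + 1 by ring, cfErr_succ, cfErr_succ, mul_assoc,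
      pow_succ]
    exact mul_le_mul ih (gaussIter_mul_gaussIter_succ_le_half hirr hρ _)
      (mul_pos (gaussIter_pos hirr hρ _) (gaussIter_pos hirr hρ _)).le (by positivity)

theorem tendsto_cfErr_atTop : Tendsto (cfErr ρ) atTop (nhds 0) := by
  rw [Metric.tendsto_atTop]
  intro ε hε
  obtain ⟨k, hk⟩ := exists_pow_lt_of_lt_one hε (by norm_num : (1 / 2 : ℝ) < 1)
  refine ⟨2 * k + 1, fun n hn => ?_⟩
  rw [Real.dist_0_eq_abs, abs_of_pos (cfErr_pos hirr hρ n)]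
  calc cfErr ρ n ≤ cfErr ρ (2 * k + 1) := cfErr_antitone hirr hρ hn
    _ ≤ (1 / 2) ^ (k + 1) := cfErr_two_mul_add_one_le hirr hρ k
    _ < ε := lt_of_le_of_lt (pow_le_pow_of_le_one (by norm_num) (by norm_num) k.le_succ) hk

theorem cfErr_le_mul_cfErr_succ {M : ℕ} (hM : ∀ i, cfK ρ i ≤ M) (n : ℕ) :
    cfErr ρ n ≤ (M + 1) * cfErr ρ (n + 1) := by
  have hx := gaussIter_pos hirr hρ (n + 1)
  have hinv : (gaussIter ρ (n + 1))⁻¹ < M + 1 :=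
    (Nat.lt_floor_add_one _).trans_le (by gcongr; exact_mod_cast hM (n + 1))
  rw [inv_lt_iff_one_lt_mul₀ hx] at hinv
  rw [cfErr_succ]
  nlinarith [cfErr_pos hirr hρ n]

theorem cfErr_le_pow_mul_cfErr_add {M : ℕ} (hM : ∀ i, cfK ρ i ≤ M) (n d : ℕ) :
    cfErr ρ n ≤ (M + 1) ^ d * cfErr ρ (n + d) := by
  induction d with
  | zero => simp
  | succ d ih =>
    calc cfErr ρ n ≤ (M + 1) ^ d * cfErr ρ (n + d) := ih
      _ ≤ (M + 1) ^ d * ((M + 1) * cfErr ρ (n + d + 1)) := by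
        gcongr; exact cfErr_le_mul_cfErr_succ hirr hρ hM (n + d)
      _ = (M + 1) ^ (d + 1) * cfErr ρ (n + (d + 1)) := by ring_nf

theorem one_le_cfDen (n : ℕ) : 1 ≤ cfDen ρ n := by
  induction n using Nat.twoStepInduction with
  | zero => rfl
  | one => exact one_le_cfK hirr hρ 0
  | more n _ ih =>
    have := one_le_cfK hirr hρ (n + 1)
    simp only [cfDen]
    nlinarith

theorem cfDen_monotone : Monotone (cfDen ρ) := by
  refine monotone_nat_of_le_succ fun n => ?_
  cases n with
  | zero => exact one_le_cfK hirr hρ 0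
  | succ n =>
    have := one_le_cfK hirr hρ (n + 1)
    simp only [cfDen]
    nlinarith

theorem two_mul_cfDen_le (n : ℕ) : 2 * cfDen ρ n ≤ cfDen ρ (n + 2) := by
  have := one_le_cfK hirr hρ (n + 1)
  have := cfDen_monotone hirr hρ n.le_succ
  simp only [cfDen]
  nlinarith

theorem cfDen_mul_sub_cfNum (n : ℕ) :
    (cfDen ρ n : ℝ) * ρ - cfNum ρ n = (-1) ^ n * cfErr ρ n := by
  induction n using Nat.twoStepInduction with
  | zero => simp [cfDen, cfNum, cfErr, gaussIter]
  | one =>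
    have h := gaussIter_mul_gaussIter_succ hirr hρ 0
    simp only [cfErr, Finset.prod_range_succ, Finset.prod_range_zero]
    simp only [gaussIter, Function.iterate_zero, id] at h ⊢
    simp only [cfDen, cfNum]
    push_cast
    linear_combination h
  | more n ih₀ ih₁ =>
    have h := gaussIter_mul_gaussIter_succ hirr hρ (n + 1)
    simp only [cfDen, cfNum, cfErr_succ, pow_succ] at ih₁ ⊢
    push_cast
    linear_combination (cfK ρ (n + 1) : ℝ) * ih₁ + ih₀ - (-1) ^ n * cfErr ρ n * h

theorem cfDen_mul_sub_cfNum_mul_succ_neg (n : ℕ) :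
    ((cfDen ρ n : ℝ) * ρ - cfNum ρ n) * ((cfDen ρ (n + 1) : ℝ) * ρ - cfNum ρ (n + 1)) < 0 := by
  have hpow : ((-1 : ℝ) ^ n) ^ 2 = 1 := by rw [← pow_mul, mul_comm, pow_mul]; norm_num
  have hpos := mul_pos (mul_pos (cfErr_pos hirr hρ n) (cfErr_pos hirr hρ n))
    (gaussIter_pos hirr hρ (n + 1))
  rw [cfDen_mul_sub_cfNum hirr hρ, cfDen_mul_sub_cfNum hirr hρ, cfErr_succ]
  linear_combination (exp := 1) hpos - (cfErr ρ n * cfErr ρ n * gaussIter ρ (n + 1)) * hpow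

/-- Best approximation property of the convergent denominators. -/
theorem cfErr_le_abs_mul_sub {n : ℕ} {t : ℤ} (ht : t ≠ 0) (htq : |t| < cfDen ρ (n + 1)) (u : ℤ) :
    cfErr ρ n ≤ |t * ρ - u| := by
  obtain ⟨A, B, rfl, rfl⟩ := exists_eq_cfDen_cfNum_combination ρ n t u
  obtain ⟨hA, hAB⟩ := ne_zero_and_mul_nonpos_of_abs_add_lt
    (by exact_mod_cast one_le_cfDen hirr hρ n) (by exact_mod_cast one_le_cfDen hirr hρ (n + 1))
    ht htq
  set γ₀ : ℝ := cfDen ρ n * ρ - cfNum ρ n with hγ₀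
  set γ₁ : ℝ := cfDen ρ (n + 1) * ρ - cfNum ρ (n + 1)
  have hdecomp : ((A * cfDen ρ n + B * cfDen ρ (n + 1) : ℤ) : ℝ) * ρ
      - (A * cfNum ρ n + B * cfNum ρ (n + 1) : ℤ) = A * γ₀ + B * γ₁ := by
    push_cast; ring
  have hsign : 0 ≤ (A * γ₀) * (B * γ₁) := by
    rw [mul_mul_mul_comm]
    exact mul_nonneg_of_nonpos_of_nonpos (by exact_mod_cast hAB)
      (cfDen_mul_sub_cfNum_mul_succ_neg hirr hρ n).le
  have hA' : (1 : ℝ) ≤ |(A : ℝ)| := by exact_mod_cast Int.one_le_abs hA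
  calc cfErr ρ n ≤ |(A : ℝ)| * cfErr ρ n := le_mul_of_one_le_left (cfErr_pos hirr hρ n).le hA'
    _ = |A * γ₀| := by
      rw [hγ₀, cfDen_mul_sub_cfNum hirr hρ, abs_mul, abs_mul, abs_pow, abs_neg, abs_one,
        one_pow, one_mul, abs_of_pos (cfErr_pos hirr hρ n)]
    _ ≤ _ := by rw [hdecomp]; exact abs_le_abs_add_of_mul_nonneg hsign

theorem cfErr_le_norm_coe_mul {n : ℕ} {t : ℤ} (ht : t ≠ 0) (htq : |t| < cfDen ρ (n + 1)) :
    cfErr ρ n ≤ ‖((t * ρ : ℝ) : UnitAddCircle)‖ := by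
  rw [UnitAddCircle.norm_eq]
  exact cfErr_le_abs_mul_sub hirr hρ ht htq _

theorem eq_of_norm_coe_lt {M : ℕ} (hM : ∀ i, cfK ρ i ≤ M) {α : ℝ} {n : ℕ} {t t' : ℤ}
    (ht : |t| ≤ 2 * cfDen ρ (n + 2)) (ht' : |t'| ≤ 2 * cfDen ρ (n + 2))
    (hαt : ‖((α + t * ρ : ℝ) : UnitAddCircle)‖ < (2 * ((M : ℝ) + 1) ^ 7)⁻¹ * cfErr ρ n)
    (hαt' : ‖((α + t' * ρ : ℝ) : UnitAddCircle)‖ < (2 * ((M : ℝ) + 1) ^ 7)⁻¹ * cfErr ρ n) :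
    t = t' := by
  by_contra hne
  have hq : 8 * cfDen ρ (n + 2) ≤ cfDen ρ (n + 8) := by
    linarith [two_mul_cfDen_le hirr hρ (n + 2), two_mul_cfDen_le hirr hρ (n + 4),
      two_mul_cfDen_le hirr hρ (n + 6)]
  have hq' : (8 * cfDen ρ (n + 2) : ℤ) ≤ cfDen ρ (n + 7 + 1) := by exact_mod_cast hq
  have hpos : (1 : ℤ) ≤ cfDen ρ (n + 2) := by exact_mod_cast one_le_cfDen hirr hρ (n + 2)
  have hdiff : |t - t'| < cfDen ρ (n + 7 + 1) := by
    linarith [abs_sub t t']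
  have hbest := cfErr_le_norm_coe_mul hirr hρ (sub_ne_zero.2 hne) hdiff
  have htri : ‖(((t - t' : ℤ) * ρ : ℝ) : UnitAddCircle)‖
      ≤ ‖((α + t * ρ : ℝ) : UnitAddCircle)‖ + ‖((α + t' * ρ : ℝ) : UnitAddCircle)‖ := by
    rw [show (((t - t' : ℤ) * ρ : ℝ) : UnitAddCircle)
        = ((α + t * ρ : ℝ) : UnitAddCircle) - ((α + t' * ρ : ℝ) : UnitAddCircle) by
      rw [← AddCircle.coe_sub]; push_cast; ring_nf]
    exact norm_sub_le _ _
  have hM7 : (0 : ℝ) < ((M : ℝ) + 1) ^ 7 := by positivity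
  have hclose : ((M : ℝ) + 1) ^ 7 * cfErr ρ (n + 7) < cfErr ρ n := by
    rw [← lt_inv_mul_iff₀ hM7]
    calc cfErr ρ (n + 7) ≤ _ := hbest.trans htri
      _ < (2 * ((M : ℝ) + 1) ^ 7)⁻¹ * cfErr ρ n + (2 * ((M : ℝ) + 1) ^ 7)⁻¹ * cfErr ρ n :=
        add_lt_add hαt hαt'
      _ = (((M : ℝ) + 1) ^ 7)⁻¹ * cfErr ρ n := by rw [mul_inv]; ring
  linarith [cfErr_le_pow_mul_cfErr_add hirr hρ hM n 7]

theorem frequently_forall_le_norm_coe {M : ℕ} (hM : ∀ i, cfK ρ i ≤ M) {α : ℝ}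
    (hα : ∀ t : ℤ, ((α + t * ρ : ℝ) : UnitAddCircle) ≠ 0) :
    ∃ᶠ n in atTop, ∀ t : ℤ, |t| ≤ 2 * cfDen ρ (n + 1) →
      (2 * ((M : ℝ) + 1) ^ 7)⁻¹ * cfErr ρ n ≤ ‖((α + t * ρ : ℝ) : UnitAddCircle)‖ := by
  set c : ℝ := (2 * ((M : ℝ) + 1) ^ 7)⁻¹
  by_contra h
  obtain ⟨N, hN⟩ := eventually_atTop.1 (not_frequently.1 h)
  simp only [not_forall, not_le, exists_prop] at hN
  choose! τ hτ hτlt using hN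
  have hconst : ∀ n ≥ N, τ n = τ N := by
    intro n hn
    induction n, hn using Nat.le_induction with
    | base => rfl
    | succ n hn ih =>
      rw [← ih]
      refine (eq_of_norm_coe_lt hirr hρ hM ?_ (hτ (n + 1) (by omega)) (hτlt n hn) ?_).symm
      · exact (hτ n hn).trans (by gcongr; exact_mod_cast cfDen_monotone hirr hρ n.succ.le_succ)
      · exact (hτlt (n + 1) (by omega)).trans_le
          (by gcongr; exact cfErr_antitone hirr hρ n.le_succ)
  have hlim : Tendsto (fun n => c * cfErr ρ n) atTop (nhds 0) := by
    simpa using (tendsto_cfErr_atTop hirr hρ).const_mul c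
  have hzero : ‖((α + τ N * ρ : ℝ) : UnitAddCircle)‖ ≤ 0 :=
    ge_of_tendsto hlim (eventually_atTop.2 ⟨N, fun n hn => hconst n hn ▸ (hτlt n hn).le⟩)
  exact hα (τ N) (norm_le_zero_iff.1 hzero)

theorem le_barycentric_rotElemR_le {c x0 z0 : ℝ} (hc : 0 ≤ c) {n lvl i k : ℕ} {j : ℤ}
    (hfar : ∀ t : ℤ, |t| ≤ 2 * cfDen ρ (n + 1) →
      c * cfErr ρ n ≤ ‖((z0 - x0 + t * ρ : ℝ) : UnitAddCircle)‖)
    (hk : k < cfDen ρ (n + 1)) (hi : i < cfDen ρ (n + 1)) (hlvl : cfDen ρ lvl ≤ cfDen ρ (n + 1))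
    (hErr : cfErr ρ lvl ≤ cfErr ρ n) (hmem : z0 + k * ρ + j ∈ rotElemR ρ x0 lvl i) :
    c ≤ (z0 + k * ρ + j - sInf (rotElemR ρ x0 lvl i)) /
        (sSup (rotElemR ρ x0 lvl i) - sInf (rotElemR ρ x0 lvl i)) ∧
      (z0 + k * ρ + j - sInf (rotElemR ρ x0 lvl i)) /
        (sSup (rotElemR ρ x0 lvl i) - sInf (rotElemR ρ x0 lvl i)) ≤ 1 - c := by
  set q : ℕ := cfDen ρ lvl
  set e : ℝ := q * ρ - round (q * ρ)
  have hJ : rotElemR ρ x0 lvl i = uIcc (x0 + i * ρ) (x0 + i * ρ + e) := by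
    rw [rotElemR]; congr 1; ring
  have he : |e| ≤ cfErr ρ lvl := by
    refine (round_le _ (cfNum ρ lvl)).trans_eq ?_
    rw [cfDen_mul_sub_cfNum hirr hρ, abs_mul, abs_pow, abs_neg, abs_one, one_pow, one_mul,
      abs_of_pos (cfErr_pos hirr hρ lvl)]
  have he0 : e ≠ 0 :=
    ((hirr.natCast_mul (by linarith [one_le_cfDen hirr hρ lvl])).sub_intCast _).ne_zero
  have hdist : ∀ t : ℤ, |t| ≤ 2 * cfDen ρ (n + 1) → ∀ m : ℤ,
      c * |e| ≤ |z0 - x0 + t * ρ + m| := fun t ht m =>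
    calc c * |e| ≤ c * cfErr ρ n := by gcongr; exact he.trans hErr
      _ ≤ _ := hfar t ht
      _ ≤ _ := UnitAddCircle.norm_coe_le_abs_add_intCast _ m
  have hk' : (k : ℤ) < cfDen ρ (n + 1) := by exact_mod_cast hk
  have hi' : (i : ℤ) < cfDen ρ (n + 1) := by exact_mod_cast hi
  have hq' : (q : ℤ) ≤ cfDen ρ (n + 1) := by exact_mod_cast hlvl
  rw [hJ] at hmem ⊢
  refine le_barycentric_le_of_le_abs_sub (by simpa using he0) hmem ?_ ?_ <;>
    rw [add_sub_cancel_left]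
  · convert hdist (k - i) (abs_le.2 ⟨by omega, by omega⟩) j using 2
    push_cast; ring
  · convert hdist (k - i - q) (abs_le.2 ⟨by omega, by omega⟩) (j + round (q * ρ)) using 2
    push_cast; ring

end IrrationalRotation

/-- **Lemma 4.5.** For the rotation `T_ρ` with `ρ` irrational of bounded type and `z̃₀` with
orbit disjoint from that of `x̃₀`, there is a subsequence `(n_m)` such that the barycentric
coefficients of the points `z̃_k`, `0 ≤ k < q_{n_m+1}`, in their intervals of
`P_{n_m}(T_ρ, x̃₀)` are universally bounded in `(0,1)`. -/
theorem rotation_barycentric_bounded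
    (ρ : ℝ) (hirr : Irrational ρ) (hρ : ρ ∈ Set.Ioo (0:ℝ) 1) (hbt : BoundedType ρ)
    (x0 z0 : ℝ) (hdisj : ∀ i : ℤ, ¬ ceq z0 (x0 + (i : ℝ) * ρ)) :
    ∃ nm : ℕ → ℕ, StrictMono nm ∧ ∃ c C : ℝ, 0 < c ∧ c ≤ C ∧ C < 1 ∧
      ∀ μ : ℕ, ∀ k < cfDen ρ (nm μ + 1), ∀ J : Set ℝ, IsRotPartElem ρ x0 (nm μ) J →
        ∀ j : ℤ, (z0 + (k : ℝ) * ρ + (j : ℝ)) ∈ J →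
          c ≤ (z0 + (k : ℝ) * ρ + (j : ℝ) - sInf J) / (sSup J - sInf J) ∧
          (z0 + (k : ℝ) * ρ + (j : ℝ) - sInf J) / (sSup J - sInf J) ≤ C := by
  obtain ⟨M, hM⟩ := hbt
  set c : ℝ := (2 * ((M : ℝ) + 1) ^ 7)⁻¹
  have hc : 0 < c := by positivity
  have hc_half : c ≤ 2⁻¹ :=
    inv_anti₀ two_pos (le_mul_of_one_le_right zero_le_two (one_le_pow₀ (by simp)))
  have hα : ∀ t : ℤ, ((z0 - x0 + t * ρ : ℝ) : UnitAddCircle) ≠ 0 := fun t h => by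
    obtain ⟨m, hm⟩ := (AddCircle.coe_eq_zero_iff 1).1 h
    exact hdisj (-t) ⟨m, by push_cast; rw [zsmul_eq_mul, mul_one] at hm; linarith⟩
  obtain ⟨nm, hmono, hfar⟩ :=
    extraction_of_frequently_atTop (frequently_forall_le_norm_coe hirr hρ hM hα)
  refine ⟨nm, hmono, c, 1 - c, hc, by linarith, by linarith, ?_⟩
  rintro μ k hk J (⟨i, hi, rfl⟩ | ⟨i, hi, rfl⟩) j hmem
  · exact le_barycentric_rotElemR_le hirr hρ hc.le (hfar μ) hk hi
      (cfDen_monotone hirr hρ (nm μ).le_succ) le_rfl hmem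
  · exact le_barycentric_rotElemR_le hirr hρ hc.le (hfar μ) hk
      (hi.trans_le (cfDen_monotone hirr hρ (nm μ).le_succ)) le_rfl
      (cfErr_antitone hirr hρ (nm μ).le_succ) hmem
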